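/- Let f be a discrete Morse-Bott function on a finite abstract simplicial complex K and suppose I = C^red = {σ} is a one-element reduced collection, with dim σ = k. Let N be the closure of I and E = {ν ∈ N ∖ I : f(ν) ≤ f(σ)} its exit set. Then E = N ∖ {σ}, and the relative mod-2 homology satisfies dim H_i(N, E; ℤ/2) = 1 if i = k and 0 otherwise; equivalently the homological Conley index of I is C_t(I) = t^k. -/

import Mathlib

open Finset

noncomputable section
open scoped Classical

/-- `σ` is a facet of `τ`: `σ ⊆ τ` and `dim σ = dim τ − 1`. -/
def Facet (σ τ : Finset ℕ) : Prop := σ ⊆ τ ∧ σ.card + 1 = τ.card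

/-- A finite abstract simplicial complex: a finite family of nonempty finite sets
closed under taking nonempty subsets. -/
def IsComplex (K : Finset (Finset ℕ)) : Prop :=
  (∀ σ ∈ K, σ.Nonempty) ∧ ∀ σ ∈ K, ∀ ν, ν ⊆ σ → ν.Nonempty → ν ∈ K

/-- The closure of a set of cells: all nonempty subsets of its cells. -/
def closureOf (S : Finset (Finset ℕ)) : Finset (Finset ℕ) :=
  S.biUnion fun σ => σ.powerset.filter fun ν => ν ≠ ∅

/-- The graph on `C` joining two cells whenever their closures intersect is connected. -/
def ConnectedOn (C : Finset (Finset ℕ)) : Prop :=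
  ∀ a ∈ C, ∀ b ∈ C,
    Relation.ReflTransGen
      (fun x y => x ∈ C ∧ y ∈ C ∧ (closureOf {x} ∩ closureOf {y}).Nonempty) a b

/-- A nonempty set of cells of `K`, all with the same `f`-value, whose
closure-intersection graph is connected. -/
def IsPreCollection (K : Finset (Finset ℕ)) (f : Finset ℕ → ℝ) (C : Finset (Finset ℕ)) :
    Prop :=
  C ⊆ K ∧ C.Nonempty ∧ (∀ σ ∈ C, ∀ τ ∈ C, f σ = f τ) ∧ ConnectedOn C

/-- A collection for `f`: a maximal constant-value connected set of cells. -/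
def IsCollection (K : Finset (Finset ℕ)) (f : Finset ℕ → ℝ) (C : Finset (Finset ℕ)) :
    Prop :=
  IsPreCollection K f C ∧ ∀ C', IsPreCollection K f C' → C ⊆ C' → C' = C

/-- `#{τ ∉ C : σ < τ, f(τ) < f(σ)}`. -/
def UpCount (K : Finset (Finset ℕ)) (f : Finset ℕ → ℝ) (C : Finset (Finset ℕ))
    (σ : Finset ℕ) : ℕ :=
  (K.filter fun τ => τ ∉ C ∧ Facet σ τ ∧ f τ < f σ).card

/-- `#{ν ∉ C : ν < σ, f(ν) > f(σ)}`. -/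
def DownCount (K : Finset (Finset ℕ)) (f : Finset ℕ → ℝ) (C : Finset (Finset ℕ))
    (σ : Finset ℕ) : ℕ :=
  (K.filter fun ν => ν ∉ C ∧ Facet ν σ ∧ f σ < f ν).card

/-- A discrete Morse-Bott function on `K`. -/
def IsMorseBott (K : Finset (Finset ℕ)) (f : Finset ℕ → ℝ) : Prop :=
  ∀ C, IsCollection K f C → ∀ σ ∈ C, UpCount K f C σ ≤ 1 ∧ DownCount K f C σ ≤ 1

/-- `σ` is upward noncritical w.r.t. `C`. -/
def UpNoncrit (K : Finset (Finset ℕ)) (f : Finset ℕ → ℝ) (C : Finset (Finset ℕ))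
    (σ : Finset ℕ) : Prop :=
  ∃ w ∈ K, w ∉ C ∧ Facet σ w ∧ f w < f σ

/-- `σ` is downward noncritical w.r.t. `C`. -/
def DownNoncrit (K : Finset (Finset ℕ)) (f : Finset ℕ → ℝ) (C : Finset (Finset ℕ))
    (σ : Finset ℕ) : Prop :=
  ∃ w ∈ K, w ∉ C ∧ Facet w σ ∧ f σ < f w

/-- The reduced collection `C^red`: the cells of `C` that are neither upward nor
downward noncritical w.r.t. `C`. -/
def reducedOf (K : Finset (Finset ℕ)) (f : Finset ℕ → ℝ) (C : Finset (Finset ℕ)) :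
    Finset (Finset ℕ) :=
  C.filter fun σ => ¬ UpNoncrit K f C σ ∧ ¬ DownNoncrit K f C σ

/-- A noncritical pair: a two-element set `{σ, τ}` with `σ < τ` and `f σ ≥ f τ`. -/
def IsNoncritPair (f : Finset ℕ → ℝ) (S : Finset (Finset ℕ)) : Prop :=
  ∃ σ τ, Facet σ τ ∧ f τ ≤ f σ ∧ S = {σ, τ}

/-- A discrete Morse function in Forman's sense. -/
def IsDiscreteMorse (K : Finset (Finset ℕ)) (g : Finset ℕ → ℝ) : Prop :=
  ∀ σ ∈ K, (K.filter fun τ => Facet σ τ ∧ g τ ≤ g σ).card ≤ 1 ∧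
    (K.filter fun ν => Facet ν σ ∧ g σ ≤ g ν).card ≤ 1

/-- A critical cell of `g`. -/
def IsCritical (K : Finset (Finset ℕ)) (g : Finset ℕ → ℝ) (σ : Finset ℕ) : Prop :=
  σ ∈ K ∧ (K.filter fun τ => Facet σ τ ∧ g τ ≤ g σ).card = 0 ∧
    (K.filter fun ν => Facet ν σ ∧ g σ ≤ g ν).card = 0

/-- The `k`-dimensional cells of `S`. -/
def cells (S : Finset (Finset ℕ)) (k : ℕ) : Finset (Finset ℕ) :=
  S.filter fun σ => σ.card = k + 1

/-- The `ℤ/2`-vector space with basis the `k`-dimensional cells of `S`. -/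
abbrev Chain (S : Finset (Finset ℕ)) (k : ℕ) : Type :=
  ↥(cells S k) → ZMod 2

/-- The boundary operator `C_k(S) → C_j(S)` (used with `j = k − 1`), sending each
`k`-cell of `S` to the sum of those of its facets that lie in `S`. -/
def bdry (S : Finset (Finset ℕ)) (j k : ℕ) : Chain S k →ₗ[ZMod 2] Chain S j :=
  Matrix.mulVecLin (Matrix.of fun (ν : ↥(cells S j)) (τ : ↥(cells S k)) =>
    if Facet ν.1 τ.1 then (1 : ZMod 2) else 0)

/-- `b_k(S) = dim (ker ∂_k / im ∂_{k+1})`, the `k`-th mod-2 Betti number of the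
boundary complex of `S`. -/
def bettiOf (S : Finset (Finset ℕ)) (k : ℕ) : ℕ :=
  Module.finrank (ZMod 2)
    (↥(LinearMap.ker (bdry S (k - 1) k)) ⧸
      Submodule.comap (LinearMap.ker (bdry S (k - 1) k)).subtype
        (LinearMap.range (bdry S k (k + 1))))

/-- The Poincaré polynomial `P_t(S) = Σ_k b_k(S) t^k`. -/
def PtOf (S : Finset (Finset ℕ)) : Polynomial ℕ :=
  ∑ k ∈ Finset.range (S.sup Finset.card), Polynomial.C (bettiOf S k) * Polynomial.X ^ k

/-- `dim H_k(N, E; ℤ/2)`: the homology of the quotient chain complex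
`C_*(N)/C_*(E)`, computed via the relative chain complex with basis the cells of
`N \ E` (the image of the basis of `C_k(N)` in the quotient) and the induced
boundary. -/
def relBetti (N E : Finset (Finset ℕ)) (k : ℕ) : ℕ := bettiOf (N \ E) k

/-- The relative Poincaré polynomial `Σ_k dim H_k(N, E; ℤ/2) t^k`. -/
def relPt (N E : Finset (Finset ℕ)) : Polynomial ℕ := PtOf (N \ E)

/-- The Euler characteristic `Σ_k (−1)^k dim H_k(S; ℤ/2)`. -/
def eulerOf (S : Finset (Finset ℕ)) : ℤ :=
  ∑ k ∈ Finset.range (S.sup Finset.card), (-1 : ℤ) ^ k * bettiOf S k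

/-- The relative Euler characteristic `χ(N, E) = Σ_k (−1)^k dim H_k(N, E; ℤ/2)`. -/
def relEuler (N E : Finset (Finset ℕ)) : ℤ :=
  ∑ k ∈ Finset.range ((N \ E).sup Finset.card), (-1 : ℤ) ^ k * relBetti N E k

/-! The reduced cell `σ` has no face of larger value: for a facet this is the failure of
downward noncriticality, and a face `ν` of codimension at least two with `f ν > f σ` would
have two distinct cofacets inside `σ` of value below `f ν`, outside the collection of `ν`,
against the Morse–Bott condition at `ν`. So the exit set is all of `∂σ`, the relative chain
complex has the single basis cell `σ` and zero boundary, and its homology is `ℤ/2` in degree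
`dim σ`. -/

section ReducedCell

variable {K C : Finset (Finset ℕ)} {f : Finset ℕ → ℝ} {σ ν τ₁ τ₂ : Finset ℕ} {k : ℕ}

theorem exists_isCollection_mem (f : Finset ℕ → ℝ) (hν : ν ∈ K) : ∃ C, IsCollection K f C ∧ ν ∈ C := by
  have hpre : IsPreCollection K f {ν} :=
    ⟨singleton_subset_iff.2 hν, singleton_nonempty ν,
      by simp only [mem_singleton]; rintro _ rfl _ rfl; rfl,
      by simp only [ConnectedOn, mem_singleton]; rintro _ rfl _ rfl; rfl⟩
  let candidates := K.powerset.filter fun D => IsPreCollection K f D ∧ ν ∈ D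
  obtain ⟨B, hB, hmax⟩ := exists_max_image candidates card
    ⟨{ν}, mem_filter.2 ⟨mem_powerset.2 hpre.1, hpre, mem_singleton_self ν⟩⟩
  obtain ⟨-, hBpre, hνB⟩ := mem_filter.1 hB
  refine ⟨B, ⟨hBpre, fun C' hC' hBC' => ?_⟩, hνB⟩
  exact (eq_of_subset_of_card_le hBC'
    (hmax C' (mem_filter.2 ⟨mem_powerset.2 hC'.1, hC', hBC' hνB⟩))).symm

theorem IsMorseBott.eq_of_facet_of_lt (hf : IsMorseBott K f) (hν : ν ∈ K)
    (hτ₁ : τ₁ ∈ K) (hντ₁ : Facet ν τ₁) (hlt₁ : f τ₁ < f ν)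
    (hτ₂ : τ₂ ∈ K) (hντ₂ : Facet ν τ₂) (hlt₂ : f τ₂ < f ν) : τ₁ = τ₂ := by
  obtain ⟨C', hC', hνC'⟩ := exists_isCollection_mem f hν
  have mem_upCount : ∀ τ ∈ K, Facet ν τ → f τ < f ν →
      τ ∈ K.filter fun τ => τ ∉ C' ∧ Facet ν τ ∧ f τ < f ν := fun τ hτ hντ hlt =>
    mem_filter.2 ⟨hτ, fun hτC' => hlt.ne (hC'.1.2.2.1 τ hτC' ν hνC'), hντ, hlt⟩
  exact card_le_one.1 (hf C' hC' ν hνC').1 _ (mem_upCount τ₁ hτ₁ hντ₁ hlt₁)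
    _ (mem_upCount τ₂ hτ₂ hντ₂ hlt₂)

theorem le_of_facet_of_not_downNoncrit (hC : IsCollection K f C) (hσ : σ ∈ C)
    (hσd : ¬ DownNoncrit K f C σ) (hν : ν ∈ K) (hνσ : Facet ν σ) : f ν ≤ f σ := by
  by_cases hνC : ν ∈ C
  · exact (hC.1.2.2.1 ν hνC σ hσ).le
  · exact not_lt.1 fun hlt => hσd ⟨ν, hν, hνC, hνσ, hlt⟩

theorem le_of_subset_of_mem_reducedOf_of_card_eq (hK : IsComplex K) (hf : IsMorseBott K f)
    (hC : IsCollection K f C) (hσ : σ ∈ reducedOf K f C) :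
    ∀ n ν, ν ⊆ σ → ν.Nonempty → σ.card = ν.card + n → f ν ≤ f σ
  | 0, ν, hνσ, _, hcard => by rw [eq_of_subset_of_card_le hνσ hcard.le]
  | 1, ν, hνσ, hν, hcard =>
    le_of_facet_of_not_downNoncrit hC (mem_filter.1 hσ).1 (mem_filter.1 hσ).2.2
      (hK.2 σ (hC.1.1 (mem_filter.1 hσ).1) ν hνσ hν) ⟨hνσ, hcard.symm⟩
  | n + 2, ν, hνσ, hν, hcard => by
    by_contra! hlt
    have cofacet : ∀ z ∈ σ, z ∉ ν →
        insert z ν ∈ K ∧ Facet ν (insert z ν) ∧ f (insert z ν) < f ν := by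
      intro z hzσ hzν
      have hsub : insert z ν ⊆ σ := insert_subset hzσ hνσ
      have hcard' : (insert z ν).card = ν.card + 1 := card_insert_of_notMem hzν
      refine ⟨hK.2 σ (hC.1.1 (mem_filter.1 hσ).1) _ hsub (insert_nonempty z ν),
        ⟨subset_insert z ν, hcard'.symm⟩, ?_⟩
      exact (le_of_subset_of_mem_reducedOf_of_card_eq hK hf hC hσ (n + 1) _ hsub
        (insert_nonempty z ν) (by omega)).trans_lt hlt
    obtain ⟨x, hx, y, hy, hxy⟩ :=
      one_lt_card.1 (by rw [card_sdiff_of_subset hνσ]; omega : 1 < (σ \ ν).card)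
    rw [mem_sdiff] at hx hy
    obtain ⟨hxK, hνx, hltx⟩ := cofacet x hx.1 hx.2
    obtain ⟨hyK, hνy, hlty⟩ := cofacet y hy.1 hy.2
    have heq := hf.eq_of_facet_of_lt (hK.2 σ (hC.1.1 (mem_filter.1 hσ).1) ν hνσ hν)
      hxK hνx hltx hyK hνy hlty
    have hx_mem : x ∈ insert y ν := heq ▸ mem_insert_self x ν
    exact (mem_insert.1 hx_mem).elim hxy hx.2

theorem le_of_subset_of_mem_reducedOf (hK : IsComplex K) (hf : IsMorseBott K f)
    (hC : IsCollection K f C) (hσ : σ ∈ reducedOf K f C) (hνσ : ν ⊆ σ) (hν : ν.Nonempty) :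
    f ν ≤ f σ :=
  le_of_subset_of_mem_reducedOf_of_card_eq hK hf hC hσ (σ.card - ν.card) ν hνσ hν
    (by have := card_le_card hνσ; omega)

theorem mem_closureOf_singleton : ν ∈ closureOf {σ} ↔ ν ⊆ σ ∧ ν.Nonempty := by
  simp [closureOf, nonempty_iff_ne_empty]

theorem bdry_singleton (σ : Finset ℕ) (j k : ℕ) : bdry {σ} j k = 0 := by
  have hM : (Matrix.of fun (ν : ↥(cells {σ} j)) (τ : ↥(cells {σ} k)) =>
      if Facet ν.1 τ.1 then (1 : ZMod 2) else 0) = 0 := by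
    ext ⟨ν, hν⟩ ⟨τ, hτ⟩
    obtain rfl : ν = σ := mem_singleton.1 (mem_filter.1 hν).1
    obtain rfl : τ = ν := mem_singleton.1 (mem_filter.1 hτ).1
    simp [Facet]
  rw [bdry, hM, Matrix.mulVecLin_zero]

theorem finrank_homology_of_eq_zero {F M N P : Type*} [Field F] [AddCommGroup M] [Module F M]
    [AddCommGroup N] [Module F N] [AddCommGroup P] [Module F P] :
    Module.finrank F
      (↥(LinearMap.ker (0 : M →ₗ[F] N)) ⧸
        Submodule.comap (LinearMap.ker (0 : M →ₗ[F] N)).subtype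
          (LinearMap.range (0 : P →ₗ[F] M))) =
    Module.finrank F M := by
  rw [LinearMap.range_zero, Submodule.comap_bot, Submodule.ker_subtype,
    (Submodule.quotEquivOfEqBot ⊥ rfl).finrank_eq, LinearMap.ker_zero, finrank_top]

theorem bettiOf_singleton (hk : σ.card = k + 1) (i : ℕ) :
    bettiOf {σ} i = if i = k then 1 else 0 := by
  rw [bettiOf, bdry_singleton, bdry_singleton, finrank_homology_of_eq_zero,
    Module.finrank_fintype_fun_eq_card, Fintype.card_coe, cells, filter_singleton]
  split_ifs <;> first | rfl | omega

end ReducedCell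

/-- If `I = C^red = {σ}` is a one-element reduced collection with
`dim σ = k`, `N` is the closure of `I` and `E = {ν ∈ N ∖ I : f ν ≤ f σ}`, then
`E = N ∖ {σ}` and `dim H_i(N, E; ℤ/2) = 1` for `i = k` and `0` otherwise, i.e. the
homological Conley index of `I` is `C_t(I) = t^k`. -/
theorem statement13 (K : Finset (Finset ℕ)) (hK : IsComplex K) (f : Finset ℕ → ℝ)
    (hf : IsMorseBott K f) (C : Finset (Finset ℕ)) (hC : IsCollection K f C)
    (σ : Finset ℕ) (k : ℕ) (hred : reducedOf K f C = {σ}) (hk : σ.card = k + 1) :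
    let I := reducedOf K f C
    let N := closureOf I
    let E := N.filter fun ν => ν ∉ I ∧ f ν ≤ f σ
    E = N \ {σ} ∧ (∀ i, relBetti N E i = if i = k then 1 else 0) := by
  intro I N E
  have hσ : σ ∈ reducedOf K f C := hred ▸ mem_singleton_self σ
  have hσN : σ ∈ N := by
    simp only [N, I, hred, mem_closureOf_singleton, subset_refl, true_and]
    exact card_pos.1 (by omega)
  have hE : E = N \ {σ} := by
    ext ν
    simp only [E, N, I, hred, mem_filter, mem_sdiff, mem_singleton, mem_closureOf_singleton]
    exact ⟨fun h => ⟨h.1, h.2.1⟩,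
      fun h => ⟨h.1, h.2, le_of_subset_of_mem_reducedOf hK hf hC hσ h.1.1 h.1.2⟩⟩
  have hNE : N \ E = {σ} := by
    rw [hE, sdiff_sdiff_self_left, inter_eq_right.2 (singleton_subset_iff.2 hσN)]
  exact ⟨hE, fun i => by rw [relBetti, hNE, bettiOf_singleton hk]⟩
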